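/- Let R be a ring, M a right R-module, W = End_R(M), α an anti-endomorphism of W, and n ≥ 1. Then the general bilinear form b_{T_nα} on Mⁿ, associated to the anti-endomorphism T_nα of End_R(Mⁿ) = Matₙ(W), is similar to the n-fold orthogonal sum n·b_α; in particular K_{T_nα} ≅ K_α as double R-modules. -/

import Mathlib

open MulOpposite TensorProduct Function

universe u v w v'

section Core

/-- An anti-endomorphism of a ring: additive, unital, reverses multiplication. -/
def IsAntiEndo {W : Type*} [Ring W] (α : W → W) : Prop :=
  (∀ u v : W, α (u + v) = α u + α v) ∧ α 1 = 1 ∧ ∀ u v : W, α (u * v) = α v * α u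

/-- An anti-automorphism of a ring: a bijective anti-endomorphism. -/
def IsAntiAuto {W : Type*} [Ring W] (α : W → W) : Prop :=
  IsAntiEndo α ∧ Function.Bijective α

/-- An inner automorphism of a ring: conjugation by a unit. -/
def IsInnerAut {W : Type*} [Ring W] (φ : W → W) : Prop :=
  ∃ u : Wˣ, ∀ w : W, φ w = ↑u * w * ↑u⁻¹

variable (R : Type u) [Ring R]

/-- A double `R`-module structure on the additive group `K`: two commuting
right `R`-module structures `m0` and `m1`. -/
structure DoubleModule (K : Type v) [AddCommGroup K] where
  m0 : K → R → K
  m1 : K → R → K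
  m0_add_left : ∀ (k k' : K) (r : R), m0 (k + k') r = m0 k r + m0 k' r
  m0_add_right : ∀ (k : K) (r r' : R), m0 k (r + r') = m0 k r + m0 k r'
  m0_mul : ∀ (k : K) (r r' : R), m0 k (r * r') = m0 (m0 k r) r'
  m0_one : ∀ k : K, m0 k 1 = k
  m1_add_left : ∀ (k k' : K) (r : R), m1 (k + k') r = m1 k r + m1 k' r
  m1_add_right : ∀ (k : K) (r r' : R), m1 k (r + r') = m1 k r + m1 k r'
  m1_mul : ∀ (k : K) (r r' : R), m1 k (r * r') = m1 (m1 k r) r'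
  m1_one : ∀ k : K, m1 k 1 = k
  comm : ∀ (k : K) (a b : R), m1 (m0 k a) b = m0 (m1 k b) a

variable {R}

/-- A homomorphism of double `R`-modules. -/
def IsDoubleHom {K : Type v} {K' : Type w} [AddCommGroup K] [AddCommGroup K']
    (DK : DoubleModule R K) (DK' : DoubleModule R K') (f : K → K') : Prop :=
  (∀ k k' : K, f (k + k') = f k + f k') ∧
  (∀ (k : K) (r : R), f (DK.m0 k r) = DK'.m0 (f k) r) ∧
  (∀ (k : K) (r : R), f (DK.m1 k r) = DK'.m1 (f k) r)

/-- An isomorphism of double `R`-modules. -/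
def IsDoubleIso {K : Type v} {K' : Type w} [AddCommGroup K] [AddCommGroup K']
    (DK : DoubleModule R K) (DK' : DoubleModule R K') (f : K → K') : Prop :=
  IsDoubleHom DK DK' f ∧ Function.Bijective f

/-- An anti-automorphism of a double `R`-module: an additive bijection exchanging
the two module structures. -/
def IsDoubleAntiAuto {K : Type v} [AddCommGroup K] (DK : DoubleModule R K) (θ : K → K) : Prop :=
  Function.Bijective θ ∧ (∀ k k' : K, θ (k + k') = θ k + θ k') ∧
  (∀ (k : K) (r : R), θ (DK.m0 k r) = DK.m1 (θ k) r) ∧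
  (∀ (k : K) (r : R), θ (DK.m1 k r) = DK.m0 (θ k) r)

variable (R)

/-- A general bilinear form on a right `R`-module `M` (encoded as a module over `Rᵐᵒᵖ`)
with values in a double `R`-module `(K, DK)`. -/
structure GBF (M : Type v) [AddCommGroup M] [Module Rᵐᵒᵖ M]
    (K : Type w) [AddCommGroup K] (DK : DoubleModule R K) where
  b : M → M → K
  add_left : ∀ x x' y : M, b (x + x') y = b x y + b x' y
  add_right : ∀ x y y' : M, b x (y + y') = b x y + b x y'
  smul_left : ∀ (x y : M) (r : R), b (op r • x) y = DK.m0 (b x y) r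
  smul_right : ∀ (x y : M) (r : R), b x (op r • y) = DK.m1 (b x y) r

variable {R}

namespace GBF

variable {M : Type v} [AddCommGroup M] [Module Rᵐᵒᵖ M]
  {K : Type w} [AddCommGroup K] {DK : DoubleModule R K}

/-- The right adjoint of `β` is injective. -/
def RightInjective (β : GBF R M K DK) : Prop :=
  ∀ x x' : M, (∀ y : M, β.b y x = β.b y x') → x = x'

/-- The right adjoint of `β` is bijective onto `Hom_R(M, K₀)`. -/
def RightRegular (β : GBF R M K DK) : Prop :=
  β.RightInjective ∧
  ∀ f : M → K, (∀ y y' : M, f (y + y') = f y + f y') →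
    (∀ (y : M) (r : R), f (op r • y) = DK.m0 (f y) r) →
    ∃ x : M, ∀ y : M, f y = β.b y x

/-- The left adjoint of `β` is injective. -/
def LeftInjective (β : GBF R M K DK) : Prop :=
  ∀ x x' : M, (∀ y : M, β.b x y = β.b x' y) → x = x'

/-- The left adjoint of `β` is bijective onto `Hom_R(M, K₁)`. -/
def LeftRegular (β : GBF R M K DK) : Prop :=
  β.LeftInjective ∧
  ∀ f : M → K, (∀ y y' : M, f (y + y') = f y + f y') →
    (∀ (y : M) (r : R), f (op r • y) = DK.m1 (f y) r) →
    ∃ x : M, ∀ y : M, f y = β.b x y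

/-- `α` is an adjoint anti-endomorphism for `β`: `β(w x, y) = β(x, α(w) y)`. -/
def IsAdjoint (β : GBF R M K DK) (α : Module.End Rᵐᵒᵖ M → Module.End Rᵐᵒᵖ M) : Prop :=
  ∀ (w : Module.End Rᵐᵒᵖ M) (x y : M), β.b (w x) y = β.b x (α w y)

/-- Similarity of general bilinear forms on the same module. -/
def Similar {K' : Type v'} [AddCommGroup K'] {DK' : DoubleModule R K'}
    (β : GBF R M K DK) (β' : GBF R M K' DK') : Prop :=
  ∃ f : K → K', IsDoubleIso DK DK' f ∧ ∀ x y : M, β'.b x y = f (β.b x y)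

end GBF

section Kalpha

variable {M : Type v} [AddCommGroup M] [Module Rᵐᵒᵖ M]

/-- The subgroup of `M ⊗_ℤ M` generated by the elements `(w x) ⊗ y - x ⊗ (α w y)`. -/
def kalphaRel (α : Module.End Rᵐᵒᵖ M → Module.End Rᵐᵒᵖ M) : Submodule ℤ (M ⊗[ℤ] M) :=
  Submodule.span ℤ
    {z | ∃ (w : Module.End Rᵐᵒᵖ M) (x y : M), z = (w x) ⊗ₜ[ℤ] y - x ⊗ₜ[ℤ] (α w y)}

/-- `K_α`, the quotient of `M ⊗_ℤ M` by the relations `(w x) ⊗ y = x ⊗ (α w y)`. -/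
abbrev Kalpha (α : Module.End Rᵐᵒᵖ M → Module.End Rᵐᵒᵖ M) : Type _ :=
  (M ⊗[ℤ] M) ⧸ kalphaRel α

/-- The map `x ⊗ y ↦ (x·r) ⊗ y` on `M ⊗_ℤ M`. -/
noncomputable def smulLeftMap (r : R) : (M ⊗[ℤ] M) →ₗ[ℤ] (M ⊗[ℤ] M) :=
  TensorProduct.map ((DistribMulAction.toAddMonoidHom M (op r : Rᵐᵒᵖ)).toIntLinearMap)
    LinearMap.id

/-- The map `x ⊗ y ↦ x ⊗ (y·r)` on `M ⊗_ℤ M`. -/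
noncomputable def smulRightMap (r : R) : (M ⊗[ℤ] M) →ₗ[ℤ] (M ⊗[ℤ] M) :=
  TensorProduct.map LinearMap.id
    ((DistribMulAction.toAddMonoidHom M (op r : Rᵐᵒᵖ)).toIntLinearMap)

theorem smulLeftMap_tmul (r : R) (x y : M) :
    smulLeftMap (M := M) r (x ⊗ₜ[ℤ] y) = (op r • x) ⊗ₜ[ℤ] y := by
  first
  | rfl
  | (unfold smulLeftMap; erw [TensorProduct.map_tmul]; rfl)

theorem smulRightMap_tmul (r : R) (x y : M) :
    smulRightMap (M := M) r (x ⊗ₜ[ℤ] y) = x ⊗ₜ[ℤ] (op r • y) := by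
  first
  | rfl
  | (unfold smulRightMap; erw [TensorProduct.map_tmul]; rfl)

theorem kalphaRel_le_left (α : Module.End Rᵐᵒᵖ M → Module.End Rᵐᵒᵖ M) (r : R) :
    kalphaRel α ≤ (kalphaRel α).comap (smulLeftMap (M := M) r) := by
  rw [kalphaRel, Submodule.span_le]
  rintro _ ⟨w, x, y, rfl⟩
  rw [SetLike.mem_coe, Submodule.mem_comap, map_sub]
  have h1 : smulLeftMap (M := M) r ((w x) ⊗ₜ[ℤ] y) = (w (op r • x)) ⊗ₜ[ℤ] y := by
    rw [smulLeftMap_tmul, map_smul]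
  have h2 : smulLeftMap (M := M) r (x ⊗ₜ[ℤ] (α w y)) = (op r • x) ⊗ₜ[ℤ] (α w y) := by
    rw [smulLeftMap_tmul]
  rw [h1, h2]
  exact Submodule.subset_span ⟨w, op r • x, y, rfl⟩

theorem kalphaRel_le_right (α : Module.End Rᵐᵒᵖ M → Module.End Rᵐᵒᵖ M) (r : R) :
    kalphaRel α ≤ (kalphaRel α).comap (smulRightMap (M := M) r) := by
  rw [kalphaRel, Submodule.span_le]
  rintro _ ⟨w, x, y, rfl⟩
  rw [SetLike.mem_coe, Submodule.mem_comap, map_sub]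
  have h1 : smulRightMap (M := M) r ((w x) ⊗ₜ[ℤ] y) = (w x) ⊗ₜ[ℤ] (op r • y) := by
    rw [smulRightMap_tmul]
  have h2 : smulRightMap (M := M) r (x ⊗ₜ[ℤ] (α w y)) = x ⊗ₜ[ℤ] (α w (op r • y)) := by
    rw [smulRightMap_tmul, map_smul]
  rw [h1, h2]
  exact Submodule.subset_span ⟨w, x, op r • y, rfl⟩

/-- The `m0`-action on `K_α`. -/
noncomputable def kSmul0 (α : Module.End Rᵐᵒᵖ M → Module.End Rᵐᵒᵖ M) (r : R) :
    Kalpha α →ₗ[ℤ] Kalpha α :=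
  Submodule.mapQ _ _ (smulLeftMap r) (kalphaRel_le_left α r)

/-- The `m1`-action on `K_α`. -/
noncomputable def kSmul1 (α : Module.End Rᵐᵒᵖ M → Module.End Rᵐᵒᵖ M) (r : R) :
    Kalpha α →ₗ[ℤ] Kalpha α :=
  Submodule.mapQ _ _ (smulRightMap r) (kalphaRel_le_right α r)

theorem kSmul0_mk (α : Module.End Rᵐᵒᵖ M → Module.End Rᵐᵒᵖ M) (r : R) (t : M ⊗[ℤ] M) :
    kSmul0 α r (Submodule.Quotient.mk t) = Submodule.Quotient.mk (smulLeftMap r t) := rfl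

theorem kSmul1_mk (α : Module.End Rᵐᵒᵖ M → Module.End Rᵐᵒᵖ M) (r : R) (t : M ⊗[ℤ] M) :
    kSmul1 α r (Submodule.Quotient.mk t) = Submodule.Quotient.mk (smulRightMap r t) := rfl

/-- The double `R`-module structure on `K_α`. -/
noncomputable def KalphaDM (α : Module.End Rᵐᵒᵖ M → Module.End Rᵐᵒᵖ M) :
    DoubleModule R (Kalpha α) where
  m0 k r := kSmul0 α r k
  m1 k r := kSmul1 α r k
  m0_add_left k k' r := map_add _ k k'
  m0_add_right := by
    intro k r r'
    try dsimp only
    induction k using Submodule.Quotient.induction_on with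
    | _ t =>
      rw [kSmul0_mk, kSmul0_mk, kSmul0_mk, ← Submodule.Quotient.mk_add]
      congr 1
      induction t with
      | zero => simp
      | tmul x y => simp [smulLeftMap_tmul, op_add, add_smul, TensorProduct.add_tmul]
      | add a b ha hb => rw [map_add, map_add, map_add, ha, hb]; abel
  m0_mul := by
    intro k r r'
    try dsimp only
    induction k using Submodule.Quotient.induction_on with
    | _ t =>
      rw [kSmul0_mk, kSmul0_mk, kSmul0_mk]
      congr 1
      induction t with
      | zero => simp
      | tmul x y => simp [smulLeftMap_tmul, op_mul, mul_smul]
      | add a b ha hb => rw [map_add, map_add, map_add, ha, hb]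
  m0_one := by
    intro k
    try dsimp only
    induction k using Submodule.Quotient.induction_on with
    | _ t =>
      rw [kSmul0_mk]
      congr 1
      induction t with
      | zero => simp
      | tmul x y => simp [smulLeftMap_tmul]
      | add a b ha hb => rw [map_add, ha, hb]
  m1_add_left k k' r := map_add _ k k'
  m1_add_right := by
    intro k r r'
    try dsimp only
    induction k using Submodule.Quotient.induction_on with
    | _ t =>
      rw [kSmul1_mk, kSmul1_mk, kSmul1_mk, ← Submodule.Quotient.mk_add]
      congr 1
      induction t with
      | zero => simp
      | tmul x y => simp [smulRightMap_tmul, op_add, add_smul, TensorProduct.tmul_add]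
      | add a b ha hb => rw [map_add, map_add, map_add, ha, hb]; abel
  m1_mul := by
    intro k r r'
    try dsimp only
    induction k using Submodule.Quotient.induction_on with
    | _ t =>
      rw [kSmul1_mk, kSmul1_mk, kSmul1_mk]
      congr 1
      induction t with
      | zero => simp
      | tmul x y => simp [smulRightMap_tmul, op_mul, mul_smul]
      | add a b ha hb => rw [map_add, map_add, map_add, ha, hb]
  m1_one := by
    intro k
    try dsimp only
    induction k using Submodule.Quotient.induction_on with
    | _ t =>
      rw [kSmul1_mk]
      congr 1
      induction t with
      | zero => simp
      | tmul x y => simp [smulRightMap_tmul]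
      | add a b ha hb => rw [map_add, ha, hb]
  comm := by
    intro k a c
    try dsimp only
    induction k using Submodule.Quotient.induction_on with
    | _ t =>
      rw [kSmul0_mk, kSmul1_mk, kSmul1_mk, kSmul0_mk]
      congr 1
      induction t with
      | zero => simp
      | tmul x y => simp [smulLeftMap_tmul, smulRightMap_tmul]
      | add p q hp hq => rw [map_add, map_add, map_add, map_add, hp, hq]

/-- The universal general bilinear form `b_α : M × M → K_α`. -/
noncomputable def balpha (α : Module.End Rᵐᵒᵖ M → Module.End Rᵐᵒᵖ M) :
    GBF R M (Kalpha α) (KalphaDM α) where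
  b x y := Submodule.Quotient.mk (x ⊗ₜ[ℤ] y)
  add_left x x' y := by
    try dsimp only
    rw [TensorProduct.add_tmul, Submodule.Quotient.mk_add]
  add_right x y y' := by
    try dsimp only
    rw [TensorProduct.tmul_add, Submodule.Quotient.mk_add]
  smul_left x y r := by
    show _ = kSmul0 α r (Submodule.Quotient.mk (x ⊗ₜ[ℤ] y))
    rw [kSmul0_mk]
    congr 1
  smul_right x y r := by
    show _ = kSmul1 α r (Submodule.Quotient.mk (x ⊗ₜ[ℤ] y))
    rw [kSmul1_mk]
    congr 1

end Kalpha

end Core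

theorem DoubleModule.m0_zero {R : Type u} [Ring R] {K : Type w} [AddCommGroup K]
    (DK : DoubleModule R K) (r : R) : DK.m0 0 r = 0 := by
  have h := DK.m0_add_left 0 0 r
  rw [add_zero] at h
  exact right_eq_add.mp h

theorem DoubleModule.m0_sum {R : Type u} [Ring R] {K : Type w} [AddCommGroup K]
    (DK : DoubleModule R K) {ι : Type*} (s : Finset ι) (g : ι → K) (r : R) :
    DK.m0 (∑ i ∈ s, g i) r = ∑ i ∈ s, DK.m0 (g i) r := by
  classical
  induction s using Finset.cons_induction with
  | empty => simpa using DK.m0_zero r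
  | cons a s ha ih => rw [Finset.sum_cons, Finset.sum_cons, DK.m0_add_left, ih]

theorem DoubleModule.m1_zero {R : Type u} [Ring R] {K : Type w} [AddCommGroup K]
    (DK : DoubleModule R K) (r : R) : DK.m1 0 r = 0 := by
  have h := DK.m1_add_left 0 0 r
  rw [add_zero] at h
  exact right_eq_add.mp h

theorem DoubleModule.m1_sum {R : Type u} [Ring R] {K : Type w} [AddCommGroup K]
    (DK : DoubleModule R K) {ι : Type*} (s : Finset ι) (g : ι → K) (r : R) :
    DK.m1 (∑ i ∈ s, g i) r = ∑ i ∈ s, DK.m1 (g i) r := by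
  classical
  induction s using Finset.cons_induction with
  | empty => simpa using DK.m1_zero r
  | cons a s ha ih => rw [Finset.sum_cons, Finset.sum_cons, DK.m1_add_left, ih]

/-- The `n`-fold orthogonal sum `n · b` of a general bilinear form `b`, a form on `Mⁿ`. -/
def sumForm {R : Type u} [Ring R] {M : Type v} [AddCommGroup M] [Module Rᵐᵒᵖ M]
    {K : Type w} [AddCommGroup K] {DK : DoubleModule R K}
    (β : GBF R M K DK) (n : ℕ) : GBF R (Fin n → M) K DK where
  b x y := ∑ i, β.b (x i) (y i)
  add_left x x' y := by
    try dsimp only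
    rw [← Finset.sum_add_distrib]
    exact Finset.sum_congr rfl fun i _ => β.add_left (x i) (x' i) (y i)
  add_right x y y' := by
    try dsimp only
    rw [← Finset.sum_add_distrib]
    exact Finset.sum_congr rfl fun i _ => β.add_right (x i) (y i) (y' i)
  smul_left x y r := by
    try dsimp only
    rw [DK.m0_sum]
    exact Finset.sum_congr rfl fun i _ => β.smul_left (x i) (y i) r
  smul_right x y r := by
    try dsimp only
    rw [DK.m1_sum]
    exact Finset.sum_congr rfl fun i _ => β.smul_right (x i) (y i) r

/-- The `(i,j)` matrix entry of an endomorphism of `Mⁿ`. -/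
def matEntry {R : Type u} [Ring R] {M : Type v} [AddCommGroup M] [Module Rᵐᵒᵖ M] {n : ℕ}
    (φ : Module.End Rᵐᵒᵖ (Fin n → M)) (i j : Fin n) : Module.End Rᵐᵒᵖ M :=
  (LinearMap.proj i) ∘ₗ φ ∘ₗ (LinearMap.single Rᵐᵒᵖ (fun _ : Fin n => M) j)

/-- The anti-endomorphism `T_nα` of `End_R(Mⁿ) = Matₙ(End_R(M))`: transpose followed by
entrywise application of `α`. -/
noncomputable def TnAlpha {R : Type u} [Ring R] {M : Type v} [AddCommGroup M] [Module Rᵐᵒᵖ M]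
    {n : ℕ} (α : Module.End Rᵐᵒᵖ M → Module.End Rᵐᵒᵖ M)
    (φ : Module.End Rᵐᵒᵖ (Fin n → M)) : Module.End Rᵐᵒᵖ (Fin n → M) :=
  ∑ i : Fin n, ∑ j : Fin n,
    (LinearMap.single Rᵐᵒᵖ (fun _ : Fin n => M) i) ∘ₗ (α (matEntry φ j i)) ∘ₗ
      (LinearMap.proj j)

/-!
Write `E_ij w` for the endomorphism of `Mⁿ` with the single matrix entry `w` at `(i, j)`.
The matrix entries of `T_nα w` are `α (w_ji)`, so `T_nα` is adjoint to the orthogonal sum `n·b_α`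
and the universal property of `b_{T_nα}` yields a double-module map `K_{T_nα} → K_α`,
`x ⊗ y ↦ ∑ xᵢ ⊗ yᵢ`. Conversely, fixing a coordinate `k` (possible as `n ≥ 1`), the form
`u, v ↦ eₖ u ⊗ eₖ v` has `α` as adjoint, which gives a map back. The two maps are inverse
because `T_nα (E_ij w) = E_ji (α w)`: moving `E_ik 1` across the tensor sign shows
`eᵢ u ⊗ y = eₖ u ⊗ eₖ yᵢ` in `K_{T_nα}`.
-/

section Similarity

variable {R : Type u} [Ring R] {M : Type v} [AddCommGroup M] [Module Rᵐᵒᵖ M]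
  {K : Type w} [AddCommGroup K] {DK : DoubleModule R K}

theorem IsAntiEndo.map_zero {W : Type*} [Ring W] {α : W → W} (hα : IsAntiEndo α) : α 0 = 0 :=
  (AddMonoidHom.mk' α hα.1).map_zero

namespace GBF

def toBilin (β : GBF R M K DK) : M →ₗ[ℤ] M →ₗ[ℤ] K :=
  LinearMap.mk₂ ℤ β.b β.add_left
    (fun c x y => map_zsmul (AddMonoidHom.mk' (β.b · y) (β.add_left · · y)) c x)
    β.add_right
    (fun c x y => map_zsmul (AddMonoidHom.mk' (β.b x) (β.add_right x)) c y)

theorem zero_left (β : GBF R M K DK) (y : M) : β.b 0 y = 0 :=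
  β.toBilin.map_zero₂ y

theorem sum_left (β : GBF R M K DK) {ι : Type*} (s : Finset ι) (x : ι → M) (y : M) :
    β.b (∑ i ∈ s, x i) y = ∑ i ∈ s, β.b (x i) y :=
  β.toBilin.map_sum₂ s x y

theorem sum_right (β : GBF R M K DK) {ι : Type*} (s : Finset ι) (x : M) (y : ι → M) :
    β.b x (∑ i ∈ s, y i) = ∑ i ∈ s, β.b x (y i) :=
  map_sum (β.toBilin x) y s

def comp {N : Type*} [AddCommGroup N] [Module Rᵐᵒᵖ N] (β : GBF R N K DK)
    (φ : M →ₗ[Rᵐᵒᵖ] N) : GBF R M K DK where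
  b x y := β.b (φ x) (φ y)
  add_left x x' y := by simp only [map_add, β.add_left]
  add_right x y y' := by simp only [map_add, β.add_right]
  smul_left x y r := by simp only [map_smul, β.smul_left]
  smul_right x y r := by simp only [map_smul, β.smul_right]

end GBF

variable {α : Module.End Rᵐᵒᵖ M → Module.End Rᵐᵒᵖ M}

theorem Kalpha.induction_on {p : Kalpha α → Prop} (k : Kalpha α)
    (form : ∀ x y, p ((balpha α).b x y)) (add : ∀ a b, p a → p b → p (a + b)) : p k := by
  induction k using Submodule.Quotient.induction_on with
  | _ t =>
    induction t with
    | zero => simpa [balpha] using form 0 0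
    | tmul x y => exact form x y
    | add s t hs ht => exact add _ _ hs ht

theorem balpha_isAdjoint (α : Module.End Rᵐᵒᵖ M → Module.End Rᵐᵒᵖ M) :
    (balpha α).IsAdjoint α := fun w x y =>
  (Submodule.Quotient.eq _).2 (Submodule.subset_span ⟨w, x, y, rfl⟩)

namespace GBF

noncomputable def liftKalpha (β : GBF R M K DK) (hβ : β.IsAdjoint α) : Kalpha α →ₗ[ℤ] K :=
  (kalphaRel α).liftQ (TensorProduct.lift β.toBilin) <| by
    rw [kalphaRel, Submodule.span_le]
    rintro _ ⟨w, x, y, rfl⟩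
    change lift β.toBilin (_ - _) = 0
    rw [map_sub, lift.tmul, lift.tmul, sub_eq_zero]
    exact hβ w x y

@[simp]
theorem liftKalpha_balpha (β : GBF R M K DK) (hβ : β.IsAdjoint α) (x y : M) :
    β.liftKalpha hβ ((balpha α).b x y) = β.b x y := rfl

theorem isDoubleHom_liftKalpha (β : GBF R M K DK) (hβ : β.IsAdjoint α) :
    IsDoubleHom (KalphaDM α) DK (β.liftKalpha hβ) := by
  refine ⟨map_add _, fun k r => ?_, fun k r => ?_⟩
  · induction k using Kalpha.induction_on with
    | form x y => rw [← (balpha α).smul_left, liftKalpha_balpha, liftKalpha_balpha, β.smul_left]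
    | add a b ha hb => rw [(KalphaDM α).m0_add_left, map_add, map_add, ha, hb, DK.m0_add_left]
  · induction k using Kalpha.induction_on with
    | form x y => rw [← (balpha α).smul_right, liftKalpha_balpha, liftKalpha_balpha, β.smul_right]
    | add a b ha hb => rw [(KalphaDM α).m1_add_left, map_add, map_add, ha, hb, DK.m1_add_left]

end GBF

variable {n : ℕ}

def matrixUnit (i j : Fin n) (w : Module.End Rᵐᵒᵖ M) : Module.End Rᵐᵒᵖ (Fin n → M) :=
  LinearMap.single Rᵐᵒᵖ (fun _ : Fin n => M) i ∘ₗ w ∘ₗ LinearMap.proj j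

@[simp]
theorem matrixUnit_apply (i j : Fin n) (w : Module.End Rᵐᵒᵖ M) (x : Fin n → M) :
    matrixUnit i j w x = Pi.single i (w (x j)) := rfl

@[simp]
theorem matrixUnit_zero (i j : Fin n) : matrixUnit i j (0 : Module.End Rᵐᵒᵖ M) = 0 :=
  LinearMap.ext fun x => by simp

theorem matEntry_apply (φ : Module.End Rᵐᵒᵖ (Fin n → M)) (i j : Fin n) (u : M) :
    matEntry φ i j u = φ (Pi.single j u) i := rfl

theorem matEntry_matrixUnit (i j a b : Fin n) (w : Module.End Rᵐᵒᵖ M) :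
    matEntry (matrixUnit i j w) a b = if a = i ∧ b = j then w else 0 := by
  ext u
  by_cases ha : a = i <;> by_cases hb : b = j <;>
    simp [matEntry_apply, ha, hb]

theorem apply_eq_sum_matEntry (φ : Module.End Rᵐᵒᵖ (Fin n → M)) (x : Fin n → M) (i : Fin n) :
    φ x i = ∑ j, matEntry φ i j (x j) := by
  conv_lhs => rw [← Finset.univ_sum_single x]
  simp [matEntry_apply, Finset.sum_apply]

theorem TnAlpha_eq_sum (α : Module.End Rᵐᵒᵖ M → Module.End Rᵐᵒᵖ M)
    (φ : Module.End Rᵐᵒᵖ (Fin n → M)) :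
    TnAlpha α φ = ∑ i, ∑ j, matrixUnit i j (α (matEntry φ j i)) := rfl

theorem TnAlpha_apply (α : Module.End Rᵐᵒᵖ M → Module.End Rᵐᵒᵖ M)
    (φ : Module.End Rᵐᵒᵖ (Fin n → M)) (y : Fin n → M) (j : Fin n) :
    TnAlpha α φ y j = ∑ i, α (matEntry φ i j) (y i) := by
  simp [TnAlpha_eq_sum, Finset.sum_apply, Pi.single_apply]

theorem TnAlpha_matrixUnit {α : Module.End Rᵐᵒᵖ M → Module.End Rᵐᵒᵖ M} (h0 : α 0 = 0)
    (i j : Fin n) (w : Module.End Rᵐᵒᵖ M) :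
    TnAlpha α (matrixUnit i j w) = matrixUnit j i (α w) := by
  simp only [TnAlpha_eq_sum, matEntry_matrixUnit, apply_ite α, h0, ite_and]
  simp [apply_ite (matrixUnit _ _)]

theorem sumForm_isAdjoint {β : GBF R M K DK} (hβ : β.IsAdjoint α) :
    (sumForm β n).IsAdjoint (TnAlpha α) := by
  intro w x y
  change ∑ i, β.b (w x i) (y i) = ∑ j, β.b (x j) (TnAlpha α w y j)
  calc ∑ i, β.b (w x i) (y i) = ∑ i, ∑ j, β.b (x j) (α (matEntry w i j) (y i)) := by
        simp_rw [apply_eq_sum_matEntry w x, β.sum_left, hβ _ _ _]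
    _ = ∑ j, β.b (x j) (TnAlpha α w y j) := by
        simp_rw [TnAlpha_apply, β.sum_right]
        exact Finset.sum_comm

theorem sumForm_single_single (β : GBF R M K DK) (k : Fin n) (u v : M) :
    (sumForm β n).b (Pi.single k u) (Pi.single k v) = β.b u v := by
  change ∑ i, β.b ((Pi.single k u : Fin n → M) i) ((Pi.single k v : Fin n → M) i) = _
  rw [Finset.sum_eq_single k (fun i _ hi => by rw [Pi.single_eq_of_ne hi, β.zero_left])
    (by simp), Pi.single_eq_same, Pi.single_eq_same]

variable (α) in
theorem balpha_TnAlpha_single_left (h0 : α 0 = 0) (h1 : α 1 = 1) (i k : Fin n) (u : M)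
    (y : Fin n → M) :
    (balpha (TnAlpha α)).b (Pi.single i u) y =
      (balpha (TnAlpha α)).b (Pi.single k u) (Pi.single k (y i)) := by
  have hu : (Pi.single i u : Fin n → M) = matrixUnit (R := R) i k 1 (Pi.single k u) := by
    rw [matrixUnit_apply, Pi.single_eq_same, Module.End.one_apply]
  rw [hu, balpha_isAdjoint, TnAlpha_matrixUnit h0, h1, matrixUnit_apply, Module.End.one_apply]

theorem balpha_TnAlpha_eq_sum (h0 : α 0 = 0) (h1 : α 1 = 1) (k : Fin n) (x y : Fin n → M) :
    (balpha (TnAlpha α)).b x y =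
      ∑ i, (balpha (TnAlpha α)).b (Pi.single k (x i)) (Pi.single k (y i)) := by
  conv_lhs => rw [← Finset.univ_sum_single x]
  rw [GBF.sum_left]
  exact Finset.sum_congr rfl fun i _ => balpha_TnAlpha_single_left α h0 h1 i k (x i) y

theorem balpha_TnAlpha_comp_single_isAdjoint (h0 : α 0 = 0) (k : Fin n) :
    ((balpha (TnAlpha α)).comp (LinearMap.single Rᵐᵒᵖ (fun _ : Fin n => M) k)).IsAdjoint α := by
  intro w u v
  change (balpha (TnAlpha α)).b (Pi.single k (w u)) (Pi.single k v) =
    (balpha (TnAlpha α)).b (Pi.single k u) (Pi.single k (α w v))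
  have hwu : (Pi.single k (w u) : Fin n → M) = matrixUnit k k w (Pi.single k u) := by
    rw [matrixUnit_apply, Pi.single_eq_same]
  rw [hwu, balpha_isAdjoint, TnAlpha_matrixUnit h0, matrixUnit_apply, Pi.single_eq_same]

end Similarity

/-- `b_{T_nα}` is similar to the `n`-fold orthogonal sum `n · b_α`. -/
theorem stmt_14 {R : Type u} [Ring R] {M : Type v} [AddCommGroup M] [Module Rᵐᵒᵖ M]
    (n : ℕ) (hn : 1 ≤ n)
    (α : Module.End Rᵐᵒᵖ M → Module.End Rᵐᵒᵖ M) (hα : IsAntiEndo α) :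
    (balpha (M := Fin n → M) (TnAlpha α)).Similar (sumForm (balpha (M := M) α) n) := by
  have h0 : α 0 = 0 := hα.map_zero
  let k : Fin n := ⟨0, hn⟩
  let f := (sumForm (balpha α) n).liftKalpha (sumForm_isAdjoint (balpha_isAdjoint α))
  let g := ((balpha (TnAlpha α)).comp (LinearMap.single Rᵐᵒᵖ (fun _ : Fin n => M) k)).liftKalpha
    (balpha_TnAlpha_comp_single_isAdjoint h0 k)
  have hgf : Function.LeftInverse g f := fun t => by
    induction t using Kalpha.induction_on with
    | form x y =>
      change g (∑ i, (balpha α).b (x i) (y i)) = _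
      rw [map_sum, balpha_TnAlpha_eq_sum h0 hα.2.1 k x y]
      rfl
    | add a b ha hb => rw [map_add, map_add, ha, hb]
  have hfg : Function.RightInverse g f := fun t => by
    induction t using Kalpha.induction_on with
    | form u v => exact sumForm_single_single (balpha α) k u v
    | add a b ha hb => rw [map_add, map_add, ha, hb]
  exact ⟨f, ⟨GBF.isDoubleHom_liftKalpha _ _, hgf.injective, hfg.surjective⟩, fun x y => rfl⟩
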